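/- For any directed graph G with finitely many strongly connected components, every partition {P_1, P_2} of the vertices of G that is separable on G is infinitely separable on G. -/

import Mathlib

/-- Infinitary propositional formulas over signature `σ`:
atoms, conjunctions and disjunctions of (index-)sets of formulas, implication. -/
inductive Formula (σ : Type) : Type 1
  | atom : σ → Formula σ
  | conj : (ι : Type) → (ι → Formula σ) → Formula σ
  | disj : (ι : Type) → (ι → Formula σ) → Formula σ
  | imp : Formula σ → Formula σ → Formula σ

namespace Formula

variable {σ : Type}

/-- `⊥` is the empty disjunction. -/
def bot : Formula σ := Formula.disj Empty (fun e => e.elim)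

/-- Binary conjunction `F ∧ G`. -/
def and (F G : Formula σ) : Formula σ := Formula.conj Bool (fun b => if b then F else G)

/-- Binary disjunction `F ∨ G`. -/
def or (F G : Formula σ) : Formula σ := Formula.disj Bool (fun b => if b then F else G)

/-- Negation `¬F` abbreviates `F → ⊥`. -/
def neg (F : Formula σ) : Formula σ := Formula.imp F bot

/-- Conjunction of a set of atoms. -/
def conjAtoms (S : Set σ) : Formula σ := Formula.conj S (fun p => Formula.atom p.val)

/-- Satisfaction of an infinitary formula by an interpretation `I ⊆ σ`. -/
def Sat (I : Set σ) : Formula σ → Prop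
  | .atom p => p ∈ I
  | .conj _ f => ∀ i, Sat I (f i)
  | .disj _ f => ∃ i, Sat I (f i)
  | .imp F G => Sat I F → Sat I G

open Classical in
/-- The reduct `F^I`. -/
noncomputable def reduct (I : Set σ) : Formula σ → Formula σ
  | .atom p => if p ∈ I then Formula.atom p else bot
  | .conj ι f => Formula.conj ι (fun i => reduct I (f i))
  | .disj ι f => Formula.disj ι (fun i => reduct I (f i))
  | .imp F G => if Sat I (Formula.imp F G) then Formula.imp (reduct I F) (reduct I G) else bot

/-- `I` is an `A`-stable model of `F`: `I` is minimal w.r.t. `≤_A`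
(`J ≤_A I` iff `J ⊆ I` and `I \ J ⊆ A`) among interpretations satisfying `F^I`. -/
def AStable (A : Set σ) (I : Set σ) (F : Formula σ) : Prop :=
  Sat I (reduct I F) ∧ ∀ J : Set σ, J ⊆ I → I \ J ⊆ A → Sat J (reduct I F) → J = I

/-- A stable model is a `σ`-stable model. -/
def Stable (I : Set σ) (F : Formula σ) : Prop := AStable Set.univ I F

/-- The strictly positive atoms `P(F)`. -/
def spos : Formula σ → Set σ
  | .atom p => {p}
  | .conj _ f => ⋃ i, spos (f i)
  | .disj _ f => ⋃ i, spos (f i)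
  | .imp _ H => spos H

/-- `F` is (syntactically) the formula `⊥`, i.e. an empty disjunction. -/
def IsBot : Formula σ → Prop
  | .disj ι _ => IsEmpty ι
  | _ => False

open Classical in
mutual
/-- Positive nonnegated atoms `Pnn(F)`. -/
noncomputable def pnn : Formula σ → Set σ
  | .atom p => {p}
  | .conj _ f => ⋃ i, pnn (f i)
  | .disj _ f => ⋃ i, pnn (f i)
  | .imp G H => if IsBot H then ∅ else nnn G ∪ pnn H

/-- Negative nonnegated atoms `Nnn(F)`. -/
noncomputable def nnn : Formula σ → Set σ
  | .atom _ => ∅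
  | .conj _ f => ⋃ i, nnn (f i)
  | .disj _ f => ⋃ i, nnn (f i)
  | .imp G H => if IsBot H then ∅ else pnn G ∪ nnn H
end

/-- The rules of a formula, as antecedent/consequent pairs. -/
def rules : Formula σ → Set (Formula σ × Formula σ)
  | .atom _ => ∅
  | .conj _ f => ⋃ i, rules (f i)
  | .disj _ f => ⋃ i, rules (f i)
  | .imp G H => insert (G, H) (rules H)

/-- Edge relation of the positive dependency graph `DG_A[F]` (vertex set `A`). -/
noncomputable def DGEdge (F : Formula σ) (A : Set σ) (p q : σ) : Prop :=
  p ∈ A ∧ q ∈ A ∧ ∃ R ∈ rules F, p ∈ spos R.2 ∧ q ∈ pnn R.1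

/-- The atoms occurring in a formula. -/
def atoms : Formula σ → Set σ
  | .atom p => {p}
  | .conj _ f => ⋃ i, atoms (f i)
  | .disj _ f => ⋃ i, atoms (f i)
  | .imp G H => atoms G ∪ atoms H

/-- `G` is a definition for the set `Q` of atoms: a conjunction of formulas
`H ∧ C^∧ → q` with `q ∈ Q`, `C ⊆ Q`, and no atom of `Q` occurring in `H`. -/
def IsDefinition (Q : Set σ) (G : Formula σ) : Prop :=
  ∃ (ι : Type) (g : ι → Formula σ), G = Formula.conj ι g ∧
    ∀ i, ∃ (H : Formula σ) (C : Set σ) (q : σ),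
      q ∈ Q ∧ C ⊆ Q ∧ (∀ p ∈ Q, p ∉ atoms H) ∧
      g i = Formula.imp (Formula.and H (conjAtoms C)) (Formula.atom q)

end Formula

section Graph

variable {V : Type*}

/-- An infinite walk in the directed graph with edge relation `E`. -/
def IsInfWalk (E : V → V → Prop) (w : ℕ → V) : Prop := ∀ i, E (w i) (w (i + 1))

/-- The partition `{P₁, P₂}` is infinitely separable: every infinite walk
visits `P₁` or `P₂` only finitely often. -/
def InfSeparable (E : V → V → Prop) (P1 P2 : Set V) : Prop :=
  ∀ w : ℕ → V, IsInfWalk E w → {i | w i ∈ P1}.Finite ∨ {i | w i ∈ P2}.Finite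

/-- `u` and `v` are in the same strongly connected component:
each is reachable from the other. -/
def SameSCC (E : V → V → Prop) (u v : V) : Prop :=
  Relation.ReflTransGen E u v ∧ Relation.ReflTransGen E v u

/-- The partition `{P₁, P₂}` is separable: every strongly connected
component is contained in `P₁` or in `P₂`. -/
def Separable (E : V → V → Prop) (P1 P2 : Set V) : Prop :=
  ∀ u v, SameSCC E u v → ((u ∈ P1 ∧ v ∈ P1) ∨ (u ∈ P2 ∧ v ∈ P2))

end Graph

/-!
If there are finitely many strongly connected components, an infinite walk meets one of them,
say `C`, infinitely often; every vertex visited after the first visit to `C` lies on a path from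
`C` back to `C`, hence in `C`. So a tail of the walk
stays in `C`, which separability puts inside `P₁` or inside `P₂`.
-/

section SCC

variable {V : Type*} {E : V → V → Prop} {w : ℕ → V}

theorem IsInfWalk.reflTransGen (hw : IsInfWalk E w) {i j : ℕ} (hij : i ≤ j) :
    Relation.ReflTransGen E (w i) (w j) :=
  (reflTransGen_of_succ_of_le (fun i j => E (w i) (w j)) (fun k _ => hw k) hij).lift w
    fun _ _ => id

theorem IsInfWalk.sameSCC_of_le_of_infinite (hw : IsInfWalk E w) {s : V}
    (hs : {i | SameSCC E (w i) s}.Infinite) {i₀ k : ℕ} (hi₀ : SameSCC E (w i₀) s)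
    (hk : i₀ ≤ k) : SameSCC E (w i₀) (w k) := by
  obtain ⟨j, hj, hkj⟩ := hs.exists_gt k
  exact ⟨hw.reflTransGen hk, (hw.reflTransGen hkj.le).trans (hj.1.trans hi₀.2)⟩

theorem exists_infinite_setOf_sameSCC
    (hfin : ∃ S : Set V, S.Finite ∧ ∀ v : V, ∃ s ∈ S, SameSCC E v s) (w : ℕ → V) :
    ∃ s, {i | SameSCC E (w i) s}.Infinite := by
  obtain ⟨S, hS, hrep⟩ := hfin
  by_contra! hfinite
  have hunion : (Set.univ : Set ℕ) ⊆ ⋃ s ∈ S, {i | SameSCC E (w i) s} := fun i _ => by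
    simpa using hrep (w i)
  exact Set.infinite_univ ((hS.biUnion fun s _ => hfinite s).subset hunion)

theorem IsInfWalk.exists_forall_ge_sameSCC (hw : IsInfWalk E w)
    (hfin : ∃ S : Set V, S.Finite ∧ ∀ v : V, ∃ s ∈ S, SameSCC E v s) :
    ∃ i₀, ∀ k, i₀ ≤ k → SameSCC E (w i₀) (w k) := by
  obtain ⟨s, hs⟩ := exists_infinite_setOf_sameSCC hfin w
  obtain ⟨i₀, hi₀⟩ := hs.nonempty
  exact ⟨i₀, fun k => hw.sameSCC_of_le_of_infinite hs hi₀⟩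

variable {P₁ P₂ : Set V}

theorem Separable.symm (h : Separable E P₁ P₂) : Separable E P₂ P₁ :=
  fun u v huv => (h u v huv).symm

theorem Separable.mem_of_sameSCC (h : Separable E P₁ P₂) (hdisj : Disjoint P₁ P₂) {u v : V}
    (huv : SameSCC E u v) (hv : v ∈ P₁) : u ∈ P₁ := by
  rcases h u v huv with ⟨hu, -⟩ | ⟨-, hv₂⟩
  · exact hu
  · exact absurd hv₂ (Set.disjoint_left.1 hdisj hv)

theorem Separable.finite_setOf_mem (h : Separable E P₁ P₂) (hdisj : Disjoint P₁ P₂) {i₀ : ℕ}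
    (htail : ∀ k, i₀ ≤ k → SameSCC E (w i₀) (w k)) (hi₀ : w i₀ ∉ P₁) :
    {i | w i ∈ P₁}.Finite :=
  (Set.finite_Iio i₀).subset fun i hi =>
    not_le.1 fun hle => hi₀ (h.mem_of_sameSCC hdisj (htail i hle) hi)

end SCC

/-- if a directed graph has finitely many strongly connected
components, then every separable partition is infinitely separable. -/
theorem separable_infSeparable_of_finitely_many_sccs {V : Type}
    (E : V → V → Prop) (P1 P2 : Set V)
    (hdisj : Disjoint P1 P2) (hcover : P1 ∪ P2 = Set.univ)
    (hfin : ∃ S : Set V, S.Finite ∧ ∀ v : V, ∃ s ∈ S, SameSCC E v s)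
    (h : Separable E P1 P2) : InfSeparable E P1 P2 := by
  intro w hw
  obtain ⟨i₀, htail⟩ := hw.exists_forall_ge_sameSCC hfin
  by_cases hi₀ : w i₀ ∈ P1
  · exact .inr (h.symm.finite_setOf_mem hdisj.symm htail (Set.disjoint_left.1 hdisj hi₀))
  · exact .inl (h.finite_setOf_mem hdisj htail hi₀)
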